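/- arXiv:2208.09035 — 5 statements merged into one kernel-verified Lean document; each statement's English description precedes it below -/
import Mathlib

section
/- Correctness of Descartes's multiplication construction: in the Euclidean plane (EuclideanSpace ℝ (Fin 2)), let B, A, C, D, E be points such that B, A, C are not collinear, the vectors A − B and D − B lie on the same ray from the origin (SameRay ℝ (A − B) (D − B)) with D ≠ B, the vectors C − B and E − B lie on the same ray from the origin (SameRay ℝ (C − B) (E − B)) with E ≠ B, dist B A = 1, and the line through D and E is parallel to the line through A and C. Then dist B E = dist B D * dist B C. -/
open EuclideanGeometry Affine

/-- Correctness of Descartes's multiplication construction: with `BA` the unit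
segment, `BE` is the product of the segments `BD` and `BC`. -/
theorem descartes_multiplication (B A C D E : EuclideanSpace ℝ (Fin 2))
    (hncol : ¬ Collinear ℝ ({B, A, C} : Set (EuclideanSpace ℝ (Fin 2))))
    (hAD : SameRay ℝ (A - B) (D - B)) (hD : D ≠ B)
    (hCE : SameRay ℝ (C - B) (E - B)) (hE : E ≠ B)
    (hunit : dist B A = 1)
    (hpar : (affineSpan ℝ ({D, E} : Set (EuclideanSpace ℝ (Fin 2)))) ∥
      (affineSpan ℝ ({A, C} : Set (EuclideanSpace ℝ (Fin 2))))) :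
    dist B E = dist B D * dist B C := by
  have hAB : A ≠ B := by
    intro h
    apply hncol
    rw [h]
    simpa using collinear_pair ℝ B C
  have hCB : C ≠ B := by
    intro h
    apply hncol
    rw [h]
    refine Collinear.subset ?_ (collinear_pair ℝ B A)
    intro x hx
    rcases hx with rfl | rfl | rfl <;> simp
  have hA0 : A - B ≠ 0 := sub_ne_zero.mpr hAB
  have hC0 : C - B ≠ 0 := sub_ne_zero.mpr hCB
  obtain ⟨d, hd0, hdeq⟩ := hAD.exists_nonneg_left hA0
  obtain ⟨e, he0, heeq⟩ := hCE.exists_nonneg_left hC0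
  have hdir := hpar.direction_eq
  rw [direction_affineSpan, direction_affineSpan, vectorSpan_pair, vectorSpan_pair] at hdir
  have hmem : D -ᵥ E ∈ Submodule.span ℝ {A -ᵥ C} := by
    rw [← hdir]; exact Submodule.mem_span_singleton_self _
  obtain ⟨t, ht⟩ := Submodule.mem_span_singleton.mp hmem
  have ht' : t • (A - C) = D - E := ht
  have key : (d - t) • (A - B) = (e - t) • (C - B) := by
    have h1 : d • (A - B) - e • (C - B) = t • (A - B) - t • (C - B) := by
      rw [hdeq, heeq, ← smul_sub]
      have h2 : (A : EuclideanSpace ℝ (Fin 2)) - B - (C - B) = A - C := by abel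
      rw [h2, ht']
      abel
    rw [sub_smul, sub_smul]
    linear_combination (norm := module) h1
  have hed : e = d := by
    by_cases hdt : d - t = 0
    · have h2 : (e - t) • (C - B) = 0 := by rw [← key, hdt, zero_smul]
      have h3 : e - t = 0 := by
        rcases smul_eq_zero.mp h2 with h | h
        · exact h
        · exact absurd h hC0
      rw [sub_eq_zero.mp hdt, sub_eq_zero.mp h3]
    · exfalso
      apply hncol
      rw [collinear_iff_of_mem (Set.mem_insert B _)]
      refine ⟨C - B, fun p hp => ?_⟩
      have hAeq : A - B = ((e - t) / (d - t)) • (C - B) := by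
        have h4 := congrArg (fun v : EuclideanSpace ℝ (Fin 2) => (d - t)⁻¹ • v) key
        simp only [smul_smul, inv_mul_cancel₀ hdt, one_smul] at h4
        rw [h4, div_eq_inv_mul]
      rcases hp with h | h | h
      · exact ⟨0, (eq_vadd_iff_vsub_eq _ _ _).mpr (by show p - B = (0 : ℝ) • (C - B); rw [h]; simp)⟩
      · exact ⟨(e - t) / (d - t), (eq_vadd_iff_vsub_eq _ _ _).mpr (by show p - B = _; rw [h]; exact hAeq)⟩
      · exact ⟨1, (eq_vadd_iff_vsub_eq _ _ _).mpr (by show p - B = (1 : ℝ) • (C - B); rw [h]; simp)⟩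
  have hdistD : dist B D = d := by
    rw [dist_comm, dist_eq_norm, ← hdeq, norm_smul, Real.norm_eq_abs, abs_of_nonneg hd0,
      ← dist_eq_norm]
    rw [dist_comm, hunit, mul_one]
  have hdistE : dist B E = e * dist B C := by
    rw [dist_comm, dist_eq_norm, ← heeq, norm_smul, Real.norm_eq_abs, abs_of_nonneg he0,
      ← dist_eq_norm, dist_comm]
  rw [hdistE, hdistD, hed]
end

section
/- Correctness of Descartes's division construction: in the Euclidean plane (EuclideanSpace ℝ (Fin 2)), let B, A, C, D, E be points such that B, A, C are not collinear, the vectors A − B and D − B lie on the same ray from the origin (SameRay ℝ (A − B) (D − B)) with D ≠ B, the vectors C − B and E − B lie on the same ray from the origin (SameRay ℝ (C − B) (E − B)) with E ≠ B, dist B A = 1, and the line through D and E is parallel to the line through A and C. Then dist B C = dist B E / dist B D. -/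
open EuclideanGeometry Affine

/-- Correctness of Descartes's division construction: with `BA` the unit
segment, `BC` is the quotient of the segment `BE` by the segment `BD`. -/
theorem descartes_division (B A C D E : EuclideanSpace ℝ (Fin 2))
    (hncol : ¬ Collinear ℝ ({B, A, C} : Set (EuclideanSpace ℝ (Fin 2))))
    (hAD : SameRay ℝ (A - B) (D - B)) (hD : D ≠ B)
    (hCE : SameRay ℝ (C - B) (E - B)) (hE : E ≠ B)
    (hunit : dist B A = 1)
    (hpar : (affineSpan ℝ ({D, E} : Set (EuclideanSpace ℝ (Fin 2)))) ∥
      (affineSpan ℝ ({A, C} : Set (EuclideanSpace ℝ (Fin 2))))) :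
    dist B C = dist B E / dist B D := by
  have hA : A ≠ B := by
    rintro rfl
    exact hncol (by simpa using collinear_pair ℝ A C)
  have hC : C ≠ B := by
    rintro rfl
    exact hncol (by
      have : ({C, A, C} : Set (EuclideanSpace ℝ (Fin 2))) = {C, A} := by
        ext x
        simp only [Set.mem_insert_iff, Set.mem_singleton_iff]
        tauto
      rw [this]; exact collinear_pair ℝ C A)
  have hAB : A - B ≠ 0 := sub_ne_zero.2 hA
  have hCB : C - B ≠ 0 := sub_ne_zero.2 hC
  obtain ⟨d, hd, hdEq⟩ := hAD.exists_pos_left hAB (sub_ne_zero.2 hD)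
  obtain ⟨e, he, heEq⟩ := hCE.exists_pos_left hCB (sub_ne_zero.2 hE)
  -- key linear-independence consequence of noncollinearity
  have hindep : ∀ x y : ℝ, x • (A - B) = y • (C - B) → x = 0 ∧ y = 0 := by
    intro x y hxy
    by_contra h
    apply hncol
    rw [collinear_iff_of_mem (Set.mem_insert B _)]
    rcases eq_or_ne x 0 with hx | hx
    · -- then y • (C - B) = 0 with y ≠ 0 impossible; so y = 0 too, contradiction
      have hy : y • (C - B) = 0 := by rw [← hxy, hx, zero_smul]
      have : y = 0 := by
        rcases smul_eq_zero.1 hy with h' | h'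
        · exact h'
        · exact absurd h' hCB
      exact absurd ⟨hx, this⟩ h
    · refine ⟨A - B, ?_⟩
      intro p hp
      rcases hp with rfl | rfl | h'
      · exact ⟨0, by simp⟩
      · exact ⟨1, by simp⟩
      · refine ⟨x / y, ?_⟩
        have hy : y ≠ 0 := by
          rintro rfl
          rw [zero_smul] at hxy
          exact hx (by simpa [hAB] using smul_eq_zero.1 hxy)
        have hkey : (x / y) • (A - B) = C - B := by
          rw [div_eq_inv_mul, mul_smul, hxy, smul_smul, inv_mul_cancel₀ hy, one_smul]
        rw [h']
        simp [hkey]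
  -- directions equal
  have hdir := hpar.direction_eq
  rw [direction_affineSpan, direction_affineSpan, vectorSpan_pair, vectorSpan_pair] at hdir
  have hmem : (D : EuclideanSpace ℝ (Fin 2)) -ᵥ E ∈ (ℝ ∙ (A -ᵥ C)) := by
    rw [← hdir]; exact Submodule.mem_span_singleton_self _
  obtain ⟨t, ht⟩ := Submodule.mem_span_singleton.1 hmem
  have hDE : D - E = t • (A - C) := by
    simpa [vsub_eq_sub] using ht.symm
  have key : (d - t) • (A - B) = (e - t) • (C - B) := by
    have h1 : D - E = (d • (A - B)) - (e • (C - B)) := by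
      rw [hdEq, heEq]; abel
    have h2 : A - C = (A - B) - (C - B) := by abel
    rw [h1, h2, smul_sub] at hDE
    linear_combination (norm := module) hDE
  obtain ⟨hdt, het⟩ := hindep _ _ key
  have hde : d = e := by linarith [sub_eq_zero.1 hdt, sub_eq_zero.1 het]
  have hBD : dist B D = d := by
    rw [dist_comm, dist_eq_norm, ← hdEq, norm_smul, Real.norm_eq_abs, abs_of_pos hd,
      ← dist_eq_norm]
    rw [dist_comm, hunit, mul_one]
  have hBE : dist B E = e * dist B C := by
    rw [dist_comm, dist_eq_norm, ← heEq, norm_smul, Real.norm_eq_abs, abs_of_pos he,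
      ← dist_eq_norm, dist_comm]
  rw [hBD, hBE, ← hde, mul_comm, mul_div_assoc, div_self hd.ne', mul_one]
end

section
/- Correctness of Descartes's square root construction: in the Euclidean plane (EuclideanSpace ℝ (Fin 2)), let F, G, H be points with G strictly between F and H (Sbtw ℝ F G H) and dist F G = 1, and let I be a point lying on the circle with diameter FH (i.e., dist I (midpoint ℝ F H) = dist F H / 2) such that the angle ∠ I G H equals π/2. Then dist G I = Real.sqrt (dist G H). -/
open EuclideanGeometry Real

/-- Correctness of Descartes's square root construction: with `FG` the unit
segment, `G` strictly between `F` and `H`, and `I` on the circle with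
diameter `FH` with `GI ⟂ FH` at `G`, the segment `GI` is the square root of
the segment `GH`. -/
theorem descartes_sqrt (F G H I : EuclideanSpace ℝ (Fin 2))
    (hbtw : Sbtw ℝ F G H)
    (hunit : dist F G = 1)
    (hcirc : dist I (midpoint ℝ F H) = dist F H / 2)
    (hperp : ∠ I G H = π / 2) :
    dist G I = Real.sqrt (dist G H) := by
  -- Apollonius: IF² + IH² = FH²
  have happ := dist_sq_add_dist_sq_eq_two_mul_dist_midpoint_sq_add_half_dist_sq I F H
  rw [hcirc] at happ
  -- ∠ I G F = π/2
  have hpi : ∠ F G H = π := hbtw.angle₁₂₃_eq_pi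
  have hsum := angle_add_angle_eq_pi_of_angle_eq_pi I hpi
  have hperpF : ∠ I G F = π / 2 := by linarith
  -- Pythagoras
  have h1 := (dist_sq_eq_dist_sq_add_dist_sq_iff_angle_eq_pi_div_two I G F).2 hperpF
  have h2 := (dist_sq_eq_dist_sq_add_dist_sq_iff_angle_eq_pi_div_two I G H).2 hperp
  have hadd : dist F G + dist G H = dist F H := hbtw.wbtw.dist_add_dist
  have hIG : dist I G * dist I G = dist G H := by
    have hFH : dist I F ^ 2 + dist I H ^ 2 = dist F H ^ 2 := by
      rw [happ]; ring
    have hGH : dist F H = 1 + dist G H := by rw [← hadd, hunit]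
    rw [dist_comm H G] at h2
    nlinarith [h1, h2, hFH, hGH]
  rw [dist_comm G I, show dist I G = Real.sqrt (dist I G * dist I G) from
    (Real.sqrt_mul_self dist_nonneg).symm, hIG]
end

section
/- A plane section of the right circular cone parallel to a generating line is a parabola (Apollonius's symptom of the parabola, in Cartesian form): fix a real number c ≠ 0 and define φ : EuclideanSpace ℝ (Fin 2) → EuclideanSpace ℝ (Fin 3) by φ v = ![v 0 / Real.sqrt 2, v 1, v 0 / Real.sqrt 2 + c]. Then (i) φ is an isometry (it preserves Euclidean distances), and (ii) the image under φ of the parabola {v : EuclideanSpace ℝ (Fin 2) | (v 1)^2 = Real.sqrt 2 * c * (v 0) + c^2} equals the intersection of the cone {q : EuclideanSpace ℝ (Fin 3) | (q 0)^2 + (q 1)^2 = (q 2)^2} with the plane {q : EuclideanSpace ℝ (Fin 3) | q 2 = q 0 + c}. -/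
/-! `planeParam c` is a linear isometry onto the plane `z = x`, translated by `(0, 0, c)`, so it
is an isometry onto the plane `z = x + c`. The parabola is the preimage of the cone, since
`(x/√2)² + y² - (x/√2 + c)² = y² - √2·c·x - c²`; the image of a preimage is the intersection
with the range. -/

/-- The isometric parametrization of the plane `z = x + c` in Euclidean
3-space. -/
noncomputable def planeParam (c : ℝ) (v : EuclideanSpace ℝ (Fin 2)) : EuclideanSpace ℝ (Fin 3) :=
  !₂[v 0 / Real.sqrt 2, v 1, v 0 / Real.sqrt 2 + c]

open Set

lemma planeParam_sub_planeParam (c : ℝ) (x y : EuclideanSpace ℝ (Fin 2)) :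
    planeParam c x - planeParam c y = planeParam 0 (x - y) := by
  ext i
  fin_cases i <;> simp [planeParam] <;> ring

lemma norm_planeParam_zero (v : EuclideanSpace ℝ (Fin 2)) : ‖planeParam 0 v‖ = ‖v‖ := by
  have h2 : Real.sqrt 2 ^ 2 = 2 := Real.sq_sqrt zero_le_two
  rw [EuclideanSpace.norm_eq, EuclideanSpace.norm_eq, Fin.sum_univ_three, Fin.sum_univ_two]
  congr 1
  simp only [planeParam, PiLp.toLp_apply, Matrix.cons_val_zero, Matrix.cons_val_one,
    Matrix.cons_val_two, Matrix.head_cons, Matrix.tail_cons, Real.norm_eq_abs, sq_abs, add_zero]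
  rw [div_pow, h2]
  ring

lemma isometry_planeParam (c : ℝ) : Isometry (planeParam c) :=
  Isometry.of_dist_eq fun x y => by
    rw [dist_eq_norm, dist_eq_norm, planeParam_sub_planeParam, norm_planeParam_zero]

lemma range_planeParam (c : ℝ) :
    range (planeParam c) = {q : EuclideanSpace ℝ (Fin 3) | q 2 = q 0 + c} := by
  ext q
  constructor
  · rintro ⟨v, rfl⟩
    rfl
  · intro (hq : q 2 = q 0 + c)
    refine ⟨!₂[Real.sqrt 2 * q 0, q 1], ?_⟩
    ext i
    fin_cases i <;> simp [planeParam, hq.symm]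

lemma planeParam_preimage_cone (c : ℝ) :
    planeParam c ⁻¹' {q : EuclideanSpace ℝ (Fin 3) | (q 0) ^ 2 + (q 1) ^ 2 = (q 2) ^ 2} =
      {v : EuclideanSpace ℝ (Fin 2) | (v 1) ^ 2 = Real.sqrt 2 * c * (v 0) + c ^ 2} := by
  ext v
  have h2 : Real.sqrt 2 ^ 2 = 2 := Real.sq_sqrt zero_le_two
  have hsq : (v 0 / Real.sqrt 2 + c) ^ 2 =
      (v 0 / Real.sqrt 2) ^ 2 + Real.sqrt 2 * c * v 0 + c ^ 2 := by
    field_simp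
    linear_combination (-c * v 0 * Real.sqrt 2) * h2
  simp only [mem_preimage, mem_ofPred_eq, planeParam, Matrix.cons_val_zero, Matrix.cons_val_one,
    Matrix.cons_val_two, Matrix.head_cons, Matrix.tail_cons, hsq]
  constructor <;> intro h <;> linarith

theorem cone_section_parabola_general (c : ℝ) :
    Isometry (planeParam c) ∧
      planeParam c ''
          {v : EuclideanSpace ℝ (Fin 2) | (v 1) ^ 2 = Real.sqrt 2 * c * (v 0) + c ^ 2} =
        {q : EuclideanSpace ℝ (Fin 3) | (q 0) ^ 2 + (q 1) ^ 2 = (q 2) ^ 2} ∩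
          {q : EuclideanSpace ℝ (Fin 3) | q 2 = q 0 + c} := by
  refine ⟨isometry_planeParam c, ?_⟩
  rw [← planeParam_preimage_cone, image_preimage_eq_inter_range, range_planeParam]

/-- A plane section of the right circular cone parallel to a generating line
is a parabola (Apollonius's symptom of the parabola, in Cartesian form). -/
theorem cone_section_parabola (c : ℝ) (hc : c ≠ 0) :
    Isometry (planeParam c) ∧
      planeParam c ''
          {v : EuclideanSpace ℝ (Fin 2) | (v 1) ^ 2 = Real.sqrt 2 * c * (v 0) + c ^ 2} =
        {q : EuclideanSpace ℝ (Fin 3) | (q 0) ^ 2 + (q 1) ^ 2 = (q 2) ^ 2} ∩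
          {q : EuclideanSpace ℝ (Fin 3) | q 2 = q 0 + c} :=
  cone_section_parabola_general c
end

section
/- Impossibility of constructing the cube root with ruler and compass, field-theoretic form: for every natural number n and every intermediate field K of ℝ over ℚ whose degree over ℚ equals 2^n (Module.finrank ℚ K = 2^n), the real cube root of 2, i.e., (2 : ℝ) ^ ((1 : ℝ)/3), does not belong to K. -/
lemma irrational_cbrt_two : Irrational ((2 : ℝ) ^ ((1 : ℝ) / 3)) := by
  have hcube : ((2 : ℝ) ^ ((1 : ℝ) / 3)) ^ (3 : ℕ) = 2 := by
    rw [← Real.rpow_natCast ((2:ℝ)^((1:ℝ)/3)) 3, ← Real.rpow_mul (by norm_num)]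
    norm_num
  have h1 : (1 : ℝ) < (2 : ℝ) ^ ((1 : ℝ) / 3) :=
    Real.one_lt_rpow_iff_of_pos (by norm_num) |>.2 (Or.inl ⟨by norm_num, by norm_num⟩)
  have h2 : (2 : ℝ) ^ ((1 : ℝ) / 3) < 2 := by
    calc (2:ℝ) ^ ((1:ℝ)/3) < (2:ℝ) ^ (1:ℝ) :=
          Real.rpow_lt_rpow_of_exponent_lt (by norm_num) (by norm_num)
      _ = 2 := Real.rpow_one 2
  apply irrational_nrt_of_notint_nrt 3 2 (by exact_mod_cast hcube) _ (by norm_num)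
  rintro ⟨y, hy⟩
  have hy1 : (1 : ℝ) < (y : ℤ) := by rw [← hy]; exact h1
  have hy2 : ((y : ℤ) : ℝ) < 2 := by rw [← hy]; exact h2
  have : (1 : ℤ) < y := by exact_mod_cast hy1
  have : y < 2 := by exact_mod_cast hy2
  omega

lemma rat_cube_ne_two (b : ℚ) : b ^ 3 ≠ 2 := by
  intro h
  have hcube : ((2 : ℝ) ^ ((1 : ℝ) / 3)) ^ (3 : ℕ) = 2 := by
    rw [← Real.rpow_natCast ((2:ℝ)^((1:ℝ)/3)) 3, ← Real.rpow_mul (by norm_num)]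
    norm_num
  have hb : ((b : ℝ)) ^ 3 = ((2 : ℝ) ^ ((1 : ℝ) / 3)) ^ 3 := by
    rw [hcube]; exact_mod_cast h
  have : (b : ℝ) = (2 : ℝ) ^ ((1 : ℝ) / 3) :=
    (Odd.strictMono_pow (R := ℝ) ⟨1, by norm_num⟩).injective hb
  exact irrational_cbrt_two ⟨b, this⟩

/-- Impossibility of constructing the cube root with ruler and compass,
field-theoretic form: the real cube root of 2 lies in no intermediate field of
`ℝ / ℚ` whose degree over `ℚ` is a power of `2`. -/
theorem cbrt_two_not_mem_two_power_degree_field (n : ℕ) (K : IntermediateField ℚ ℝ)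
    (hK : Module.finrank ℚ K = 2 ^ n) :
    (2 : ℝ) ^ ((1 : ℝ) / 3) ∉ K := by
  intro hmem
  haveI : FiniteDimensional ℚ K :=
    FiniteDimensional.of_finrank_pos (by rw [hK]; positivity)
  set β : K := ⟨(2 : ℝ) ^ ((1 : ℝ) / 3), hmem⟩ with hβ
  have hcube : ((2 : ℝ) ^ ((1 : ℝ) / 3)) ^ (3 : ℕ) = 2 := by
    rw [← Real.rpow_natCast ((2:ℝ)^((1:ℝ)/3)) 3, ← Real.rpow_mul (by norm_num)]
    norm_num
  have hroot : Polynomial.aeval β (Polynomial.X ^ 3 - Polynomial.C (2 : ℚ)) = 0 := by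
    rw [map_sub, map_pow, Polynomial.aeval_X, Polynomial.aeval_C]
    apply Subtype.ext
    push_cast [hβ]
    rw [hcube]
    norm_num [IntermediateField.algebraMap_apply]
    exact sub_eq_zero.mpr rfl
  have hirr : Irreducible (Polynomial.X ^ 3 - Polynomial.C (2 : ℚ)) :=
    X_pow_sub_C_irreducible_of_prime (by norm_num) rat_cube_ne_two
  have hmonic : (Polynomial.X ^ 3 - Polynomial.C (2 : ℚ)).Monic :=
    Polynomial.monic_X_pow_sub_C _ (by norm_num)
  have hint : IsIntegral ℚ β := ⟨_, hmonic, hroot⟩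
  have hminpoly : minpoly ℚ β = Polynomial.X ^ 3 - Polynomial.C (2 : ℚ) :=
    (minpoly.eq_of_irreducible_of_monic hirr hroot hmonic).symm
  have hdvd : (minpoly ℚ β).natDegree ∣ Module.finrank ℚ K := minpoly.degree_dvd hint
  rw [hminpoly, Polynomial.natDegree_X_pow_sub_C, hK] at hdvd
  have : (3 : ℕ) ∣ 2 := (Nat.Prime.dvd_of_dvd_pow (by norm_num)) hdvd
  omega
end
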